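/- Let N ≥ 1 be an integer, let A₀, …, A_{2N−2} ∈ ℂ be pairwise distinct, and let γ = [[a,b],[c,d]] ∈ SL₂(ℂ). Let z, y ∈ ℂ with z ≠ y, z ≠ A_l for all l, and suppose cz + d ≠ 0, cy + d ≠ 0, and cA_l + d ≠ 0 for all l. Then π_N(γ·z, γ·y; γ·A) · (cz + d)^{−2N} · (cy + d)^{2N−2} = π_N(z, y; A), where γ·A denotes the tuple (γ·A₀, …, γ·A_{2N−2}). Equivalently, the bidifferential Π_N(z,y) = π_N(z,y;A) dz^N dy^{1−N} is Möbius invariant: Π_N(γ·z, γ·y; γ·A) = Π_N(z, y; A). -/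

import Mathlib

/-- The Möbius transformation associated to [[a,b],[c,d]]. -/
noncomputable def mobius (a b c d z : ℂ) : ℂ := (a * z + b) / (c * z + d)

/-- The Bers kernel of weight (N, 1−N):
π_N(z, y; A) = (1/(z−y)) · ∏_{l=0}^{2N−2} (y − A_l)/(z − A_l). -/
noncomputable def bersPi (N : ℕ) (A : Fin (2 * N - 1) → ℂ) (z y : ℂ) : ℂ :=
  (1 / (z - y)) * ∏ l, (y - A l) / (z - A l)

/-!
Every factor of the Bers kernel is a difference quotient, and for γ ∈ SL₂(ℂ)
γu − γv = (u − v) / ((cu + d)(cv + d)). So the prefactor 1/(γz − γy) picks up (cz + d)(cy + d)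
and each of the 2N − 1 ratios (γy − γA_l)/(γz − γA_l) picks up (cz + d)/(cy + d), the
(cA_l + d) cancelling. Altogether π_N(γz, γy; γA) = (cz + d)^{2N} (cy + d)^{2−2N} π_N(z, y; A).
-/

section Mobius

variable {a b c d : ℂ}

lemma mobius_sub_mobius (hdet : a * d - b * c = 1) {u v : ℂ}
    (hu : c * u + d ≠ 0) (hv : c * v + d ≠ 0) :
    mobius a b c d u - mobius a b c d v = (u - v) / ((c * u + d) * (c * v + d)) := by
  unfold mobius
  rw [div_sub_div _ _ hu hv]
  congr 1
  linear_combination (u - v) * hdet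

lemma mobius_sub_div_mobius_sub (hdet : a * d - b * c = 1) {z y w : ℂ}
    (hz : c * z + d ≠ 0) (hy : c * y + d ≠ 0) (hw : c * w + d ≠ 0) :
    (mobius a b c d y - mobius a b c d w) / (mobius a b c d z - mobius a b c d w)
      = (y - w) / (z - w) * ((c * z + d) / (c * y + d)) := by
  rw [mobius_sub_mobius hdet hy hw, mobius_sub_mobius hdet hz hw, div_div_div_comm,
    mul_div_mul_right _ _ hw, div_div_eq_mul_div, mul_div_assoc]

lemma prod_mobius_sub_div_mobius_sub {ι : Type*} [Fintype ι] (hdet : a * d - b * c = 1)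
    {z y : ℂ} {A : ι → ℂ} (hz : c * z + d ≠ 0) (hy : c * y + d ≠ 0)
    (hA : ∀ l, c * A l + d ≠ 0) :
    ∏ l, (mobius a b c d y - mobius a b c d (A l)) / (mobius a b c d z - mobius a b c d (A l))
      = (∏ l, (y - A l) / (z - A l)) * ((c * z + d) / (c * y + d)) ^ Fintype.card ι := by
  simp only [mobius_sub_div_mobius_sub hdet hz hy (hA _), Finset.prod_mul_distrib,
    Finset.prod_const, Finset.card_univ]

lemma bersPi_mobius {N : ℕ} (hN : 1 ≤ N) (hdet : a * d - b * c = 1)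
    {z y : ℂ} {A : Fin (2 * N - 1) → ℂ} (hz : c * z + d ≠ 0) (hy : c * y + d ≠ 0)
    (hA : ∀ l, c * A l + d ≠ 0) :
    bersPi N (fun l => mobius a b c d (A l)) (mobius a b c d z) (mobius a b c d y)
      = (c * z + d) ^ (2 * (N : ℤ)) * (c * y + d) ^ (2 - 2 * (N : ℤ)) * bersPi N A z y := by
  have hcard : ((Fintype.card (Fin (2 * N - 1)) : ℕ) : ℤ) = 2 * N - 1 := by
    rw [Fintype.card_fin]; omega
  unfold bersPi
  rw [prod_mobius_sub_div_mobius_sub hdet hz hy hA, mobius_sub_mobius hdet hz hy,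
    ← zpow_natCast, hcard, div_zpow, one_div_div]
  have hz' : (c * z + d) ^ (2 * (N : ℤ)) = (c * z + d) * (c * z + d) ^ (2 * (N : ℤ) - 1) := by
    rw [← zpow_one_add₀ hz]; ring_nf
  have hy' : (c * y + d) ^ (2 - 2 * (N : ℤ)) = (c * y + d) / (c * y + d) ^ (2 * (N : ℤ) - 1) := by
    rw [div_eq_mul_inv, ← zpow_neg, ← zpow_one_add₀ hy]; ring_nf
  rw [hz', hy']
  ring

end Mobius

theorem bersPi_mobius_invariant_general (N : ℕ) (hN : 1 ≤ N) (A : Fin (2 * N - 1) → ℂ)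
    (a b c d : ℂ) (hdet : a * d - b * c = 1) (z y : ℂ)
    (hz : c * z + d ≠ 0) (hy : c * y + d ≠ 0) (hAl : ∀ l, c * A l + d ≠ 0) :
    bersPi N (fun l => mobius a b c d (A l)) (mobius a b c d z) (mobius a b c d y)
        * (c * z + d) ^ (-(2 * (N : ℤ))) * (c * y + d) ^ (2 * (N : ℤ) - 2)
      = bersPi N A z y := by
  rw [bersPi_mobius hN hdet hz hy hAl]
  calc (c * z + d) ^ (2 * (N : ℤ)) * (c * y + d) ^ (2 - 2 * (N : ℤ)) * bersPi N A z y
        * (c * z + d) ^ (-(2 * (N : ℤ))) * (c * y + d) ^ (2 * (N : ℤ) - 2)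
      = (c * z + d) ^ (2 * (N : ℤ) + -(2 * (N : ℤ)))
          * (c * y + d) ^ (2 - 2 * (N : ℤ) + (2 * (N : ℤ) - 2)) * bersPi N A z y := by
        rw [zpow_add₀ hz, zpow_add₀ hy]; ring
    _ = bersPi N A z y := by rw [add_neg_cancel, sub_add_sub_cancel', sub_self]; simp

/-- Möbius invariance of the Bers kernel: for γ ∈ SL₂(ℂ),
π_N(γ·z, γ·y; γ·A) · (cz+d)^{−2N} · (cy+d)^{2N−2} = π_N(z, y; A). -/
theorem bersPi_mobius_invariant (N : ℕ) (hN : 1 ≤ N) (A : Fin (2 * N - 1) → ℂ)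
    (hA : Function.Injective A)
    (a b c d : ℂ) (hdet : a * d - b * c = 1) (z y : ℂ)
    (hzy : z ≠ y) (hzA : ∀ l, z ≠ A l)
    (hz : c * z + d ≠ 0) (hy : c * y + d ≠ 0) (hAl : ∀ l, c * A l + d ≠ 0) :
    bersPi N (fun l => mobius a b c d (A l)) (mobius a b c d z) (mobius a b c d y)
        * (c * z + d) ^ (-(2 * (N : ℤ))) * (c * y + d) ^ (2 * (N : ℤ) - 2)
      = bersPi N A z y :=
  bersPi_mobius_invariant_general N hN A a b c d hdet z y hz hy hAl
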